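/- arXiv:1701.03546 — 7 statements merged into one kernel-verified Lean document; each statement's English description precedes it below -/
import Mathlib

section
/- Let τ be an invertible measure-preserving transformation of a probability space (X, ℬ, p), let E ∈ ℬ with p(E) > 0, and suppose f = 1_E - p(E) is a τ-coboundary: f = h - h∘τ with h measurable. Then exp(2πi p(E)) is an eigenvalue of the Koopman operator of τ, with eigenfunction H = exp(2πi h) satisfying H∘τ = exp(-2πi p(E)) H (equivalently H∘τ⁻¹ = exp(2πi p(E))H). In particular, if 0 < p(E) < 1 then τ is not weakly mixing. -/
/-! Since `1_E` is integer-valued, applying `t ↦ exp (2πit)` to `h - h ∘ τ = 1_E - p(E)` gives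
`H ∘ τ = exp (2πi p(E)) H`, and `exp (2πit) ≠ 1` for `0 < t < 1`. -/

open MeasureTheory ENNReal Complex

namespace Complex

theorem norm_exp_two_pi_I_mul_ofReal (t : ℝ) : ‖exp (2 * Real.pi * I * t)‖ = 1 := by
  rw [show 2 * Real.pi * I * t = ((2 * Real.pi * t : ℝ) : ℂ) * I by push_cast; ring]
  exact norm_exp_ofReal_mul_I _

theorem exp_two_pi_I_mul_ofReal_eq_one_iff (t : ℝ) :
    exp (2 * Real.pi * I * t) = 1 ↔ ∃ n : ℤ, t = n := by
  rw [exp_eq_one_iff]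
  refine exists_congr fun n => ?_
  rw [show (n : ℂ) * (2 * Real.pi * I) = 2 * Real.pi * I * (n : ℝ) by push_cast; ring,
    mul_right_inj' two_pi_I_ne_zero, ofReal_inj]

theorem exp_two_pi_I_mul_ofReal_ne_one {t : ℝ} (h₀ : 0 < t) (h₁ : t < 1) :
    exp (2 * Real.pi * I * t) ≠ 1 := by
  intro hone
  obtain ⟨n, rfl⟩ := (exp_two_pi_I_mul_ofReal_eq_one_iff t).1 hone
  have : (0 : ℤ) < n := by exact_mod_cast h₀
  have : n < 1 := by exact_mod_cast h₁
  omega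

theorem exp_two_pi_I_mul_ofReal_eq_mul_of_sub_eq_int_sub {a b c : ℝ} (n : ℤ)
    (hab : a - b = n - c) :
    exp (2 * Real.pi * I * b) = exp (2 * Real.pi * I * c) * exp (2 * Real.pi * I * a) := by
  have hb : b = c + a - n := by linarith
  rw [hb, ← exp_add, show 2 * Real.pi * I * ((c + a - n : ℝ) : ℂ)
      = 2 * Real.pi * I * c + 2 * Real.pi * I * a - n * (2 * Real.pi * I) by push_cast; ring,
    exp_sub, exp_int_mul_two_pi_mul_I, div_one]

end Complex

theorem Set.exists_int_indicator_one_eq {X : Type*} (E : Set X) (x : X) :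
    ∃ n : ℤ, E.indicator (fun _ => (1 : ℝ)) x = n := by
  by_cases hx : x ∈ E
  · exact ⟨1, by simp [hx]⟩
  · exact ⟨0, by simp [hx]⟩

theorem stmt6_general {X : Type*} [MeasurableSpace X] (μ : Measure X) [IsProbabilityMeasure μ]
    (τ : X → X)
    (E : Set X) (hEpos : 0 < μ E)
    (h : X → ℝ) (hmeas : Measurable h)
    (hcob : ∀ᵐ x ∂μ, Set.indicator E (fun _ => (1 : ℝ)) x - (μ E).toReal
      = h x - h (τ x))
    (H : X → ℂ)
    (hH : ∀ x, H x = Complex.exp (2 * Real.pi * Complex.I * (h x))) :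
    (∀ x, ‖H x‖ = 1) ∧
    (∀ᵐ x ∂μ, H (τ x) = Complex.exp (2 * Real.pi * Complex.I * (μ E).toReal) * H x) ∧
    (μ E < 1 →
      (Complex.exp (2 * Real.pi * Complex.I * (μ E).toReal) ≠ 1 ∧
        ∃ (c : ℂ) (G : X → ℂ), c ≠ 1 ∧ Measurable G ∧ (∀ x, ‖G x‖ = 1) ∧
          ∀ᵐ x ∂μ, G (τ x) = c * G x)) := by
  have hnorm : ∀ x, ‖H x‖ = 1 := fun x => hH x ▸ norm_exp_two_pi_I_mul_ofReal (h x)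
  have heigen : ∀ᵐ x ∂μ,
      H (τ x) = exp (2 * Real.pi * I * (μ E).toReal) * H x := by
    filter_upwards [hcob] with x hx
    obtain ⟨n, hn⟩ := E.exists_int_indicator_one_eq x
    rw [hH, hH]
    exact exp_two_pi_I_mul_ofReal_eq_mul_of_sub_eq_int_sub n (by linarith)
  have hHmeas : Measurable H := by
    rw [funext hH]
    fun_prop
  refine ⟨hnorm, heigen, fun hlt => ?_⟩
  have hne : exp (2 * Real.pi * I * (μ E).toReal) ≠ 1 :=
    exp_two_pi_I_mul_ofReal_ne_one (ENNReal.toReal_pos hEpos.ne' (measure_ne_top μ E))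
      (by simpa using (ENNReal.toReal_lt_toReal (measure_ne_top μ E) one_ne_top).2 hlt)
  exact ⟨hne, _, H, hne, hHmeas, hnorm, heigen⟩

/-- If 1_E - p(E) = h - h∘τ with h measurable, then H = exp(2πi h) is a
unimodular eigenfunction of the Koopman operator of τ with eigenvalue exp(2πi p(E)),
and when 0 < p(E) < 1 this eigenvalue is ≠ 1, so τ is not weakly mixing (it has a
nonconstant unimodular eigenfunction with eigenvalue ≠ 1). -/
theorem stmt6 {X : Type*} [MeasurableSpace X] (μ : Measure X) [IsProbabilityMeasure μ]
    (τ τi : X → X) (hτ : MeasurePreserving τ μ μ) (hτi : MeasurePreserving τi μ μ)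
    (hinv : ∀ x, τi (τ x) = x ∧ τ (τi x) = x)
    (E : Set X) (hE : MeasurableSet E) (hEpos : 0 < μ E)
    (h : X → ℝ) (hmeas : Measurable h)
    (hcob : ∀ᵐ x ∂μ, Set.indicator E (fun _ => (1 : ℝ)) x - (μ E).toReal
      = h x - h (τ x))
    (H : X → ℂ)
    (hH : ∀ x, H x = Complex.exp (2 * Real.pi * Complex.I * (h x))) :
    (∀ x, ‖H x‖ = 1) ∧
    (∀ᵐ x ∂μ, H (τ x) = Complex.exp (2 * Real.pi * Complex.I * (μ E).toReal) * H x) ∧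
    (μ E < 1 →
      (Complex.exp (2 * Real.pi * Complex.I * (μ E).toReal) ≠ 1 ∧
        ∃ (c : ℂ) (G : X → ℂ), c ≠ 1 ∧ Measurable G ∧ (∀ x, ‖G x‖ = 1) ∧
          ∀ᵐ x ∂μ, G (τ x) = c * G x)) :=
  stmt6_general μ τ E hEpos h hmeas hcob H hH
end

section
/- Let X be a compact metric space with a Borel probability measure p, let U ⊆ X be an open dense set with p(U) < 1, and let f = 1_U - p(U). Then for every p-preserving homeomorphism τ of X and every n ≥ 1, ‖Σ_{k=1}^{n} f∘τᵏ‖_∞ ≥ n(1 - p(U)). Consequently f is not a τ-coboundary with bounded transfer function for any p-preserving homeomorphism τ. -/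
open MeasureTheory ENNReal

private lemma isOpenMap_iterate {X : Type*} [TopologicalSpace X] {g : X → X}
    (hg : IsOpenMap g) (k : ℕ) : IsOpenMap g^[k] := by
  induction k with
  | zero => simpa using IsOpenMap.id
  | succ k ih => rw [Function.iterate_succ]; exact ih.comp hg

/-- For an open dense U with p(U) < 1 and f = 1_U - p(U), every
p-preserving homeomorphism τ has sup-norm ergodic sums ‖Σ_{k=1}^n f∘τᵏ‖_∞ ≥ n(1-p(U)),
so f is not a τ-coboundary with bounded transfer function. -/
theorem stmt7 {X : Type*} [MetricSpace X] [CompactSpace X] [MeasurableSpace X]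
    [BorelSpace X] (p : Measure X) [IsProbabilityMeasure p]
    (U : Set X) (hUopen : IsOpen U) (hUdense : Dense U) (hU : p U < 1)
    (f : X → ℝ)
    (hf : ∀ x, f x = Set.indicator U (fun _ => (1 : ℝ)) x - (p U).toReal)
    (τ : X ≃ₜ X) (hτ : MeasurePreserving τ p p) :
    (∀ n : ℕ, 1 ≤ n →
      ∃ x, (n : ℝ) * (1 - (p U).toReal) ≤ |∑ k ∈ Finset.Icc 1 n, f ((⇑τ)^[k] x)|) ∧
    ¬ ∃ h : X → ℝ, (∃ C : ℝ, ∀ x, |h x| ≤ C) ∧ ∀ x, f x = h x - h (τ x) := by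
  have hXne : Nonempty X := by
    by_contra hE
    rw [not_nonempty_iff] at hE
    have h1 : p Set.univ = 1 := measure_univ
    rw [Set.univ_eq_empty_iff.2 hE, measure_empty] at h1
    exact zero_ne_one h1
  -- the intersection of all iterated preimages of U is dense, hence nonempty
  have hopenmap : IsOpenMap (⇑τ) := τ.isOpenMap
  have hdense : Dense (⋂ k : ℕ, (⇑τ)^[k] ⁻¹' U) := by
    apply dense_iInter_of_isOpen
    · intro k
      exact hUopen.preimage ((τ.continuous).iterate k)
    · intro k
      exact hUdense.preimage (isOpenMap_iterate hopenmap k)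
  obtain ⟨x₀, hx₀⟩ := hdense.nonempty
  simp only [Set.mem_iInter, Set.mem_preimage] at hx₀
  have hpU1 : (p U).toReal ≤ 1 := by
    have := hU.le
    calc (p U).toReal ≤ (1 : ℝ≥0∞).toReal := ENNReal.toReal_mono one_ne_top this
    _ = 1 := by simp
  have key : ∀ n : ℕ, 1 ≤ n →
      ∃ x, (n : ℝ) * (1 - (p U).toReal) ≤ |∑ k ∈ Finset.Icc 1 n, f ((⇑τ)^[k] x)| := by
    intro n hn
    refine ⟨x₀, ?_⟩
    have hval : ∀ k ∈ Finset.Icc 1 n, f ((⇑τ)^[k] x₀) = 1 - (p U).toReal := by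
      intro k _
      rw [hf, Set.indicator_of_mem (hx₀ k)]
    have hsum : ∑ k ∈ Finset.Icc 1 n, f ((⇑τ)^[k] x₀) = (n : ℝ) * (1 - (p U).toReal) := by
      rw [Finset.sum_congr rfl hval, Finset.sum_const, Nat.card_Icc]
      simp [mul_comm]
    rw [hsum, abs_of_nonneg]
    exact mul_nonneg (Nat.cast_nonneg n) (by linarith)
  refine ⟨key, ?_⟩
  rintro ⟨h, ⟨C, hC⟩, hcob⟩
  -- telescoping: the ergodic sums are bounded by 2C
  have htel : ∀ x : X, ∀ n : ℕ,
      ∑ k ∈ Finset.Icc 1 n, f ((⇑τ)^[k] x) = h ((⇑τ)^[1] x) - h ((⇑τ)^[n+1] x) := by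
    intro x n
    have : ∀ k : ℕ, f ((⇑τ)^[k] x) = h ((⇑τ)^[k] x) - h ((⇑τ)^[k+1] x) := by
      intro k
      rw [hcob ((⇑τ)^[k] x), Function.iterate_succ_apply']
    calc ∑ k ∈ Finset.Icc 1 n, f ((⇑τ)^[k] x)
        = ∑ i ∈ Finset.range n, f ((⇑τ)^[i+1] x) := by
          rw [← Finset.Ico_add_one_right_eq_Icc, Finset.sum_Ico_eq_sum_range]
          simp [add_comm]
      _ = ∑ i ∈ Finset.range n, (h ((⇑τ)^[i+1] x) - h ((⇑τ)^[i+1+1] x)) := by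
          exact Finset.sum_congr rfl fun i _ => this (i+1)
      _ = h ((⇑τ)^[0+1] x) - h ((⇑τ)^[n+1] x) := Finset.sum_range_sub' (fun i => h ((⇑τ)^[i+1] x)) n
      _ = h ((⇑τ)^[1] x) - h ((⇑τ)^[n+1] x) := by norm_num
  have hbd : ∀ x : X, ∀ n : ℕ, |∑ k ∈ Finset.Icc 1 n, f ((⇑τ)^[k] x)| ≤ 2 * C := by
    intro x n
    rw [htel]
    calc |h ((⇑τ)^[1] x) - h ((⇑τ)^[n+1] x)|
        ≤ |h ((⇑τ)^[1] x)| + |h ((⇑τ)^[n+1] x)| := abs_sub _ _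
      _ ≤ C + C := add_le_add (hC _) (hC _)
      _ = 2 * C := by ring
  have hCpos : 0 ≤ C := le_trans (abs_nonneg _) (hC (Classical.arbitrary X))
  have hε : 0 < 1 - (p U).toReal := by
    have : (p U).toReal < 1 := by
      rw [← ENNReal.toReal_one]
      exact ENNReal.toReal_strict_mono one_ne_top hU
    linarith
  obtain ⟨n, hn⟩ := exists_nat_gt ((2 * C) / (1 - (p U).toReal))
  have hn1 : 1 ≤ n := by
    by_contra hn'
    push_neg at hn'
    interval_cases n
    simp only [Nat.cast_zero] at hn
    have : 0 ≤ (2 * C) / (1 - (p U).toReal) := div_nonneg (by linarith) hε.le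
    linarith
  obtain ⟨x, hx⟩ := key n hn1
  have h1 : (2 * C) < (n : ℝ) * (1 - (p U).toReal) := by
    rw [div_lt_iff₀ hε] at hn
    linarith
  have h2 := hbd x n
  linarith
end

section
/- Let α be an irrational number and suppose f ∈ L¹(𝕋) is mean-zero with |f̂(n)| ≥ (log n)/n for all n ≥ 2. Then f is not a τ_α-coboundary with transfer function in L¹(𝕋), where τ_α is rotation by α. -/
/-!
If `f = h - h ∘ τ_α` with `h ∈ L¹`, then `f̂ n = (1 - e(nα)) ĥ n`, so
`|f̂ n| ≤ 2π ‖nα‖ ‖h‖₁`, where `‖·‖` is the distance to the nearest integer. Since `α` is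
irrational, Dirichlet's theorem gives arbitrarily large `n` with `‖nα‖ ≤ 1/n`, and for those
`log n / n ≤ |f̂ n| ≤ 2π ‖h‖₁ / n`, which fails once `log n > 2π ‖h‖₁`.
-/

open MeasureTheory

namespace AddCircle

variable {T : ℝ} [hT : Fact (0 < T)]

theorem norm_toCircle_coe_sub_one_le (t : ℝ) :
    ‖(toCircle (t : AddCircle T) : ℂ) - 1‖ ≤ 2 * Real.pi / T * |t| := by
  have hpos : 0 < 2 * Real.pi / T := div_pos Real.two_pi_pos hT.out
  have := Real.norm_exp_I_mul_ofReal_sub_one_le (x := 2 * Real.pi / T * t)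
  rw [Real.norm_eq_abs, abs_mul, abs_of_pos hpos] at this
  rwa [toCircle_apply_mk, Circle.coe_exp, mul_comm]

theorem norm_toCircle_sub_one_le (x : AddCircle T) :
    ‖(toCircle x : ℂ) - 1‖ ≤ 2 * Real.pi / T * ‖x‖ := by
  induction x using QuotientAddGroup.induction_on with | H t => ?_
  have hs : ((t - round (T⁻¹ * t) * T : ℝ) : AddCircle T) = t := by
    simp [sub_eq_add_neg, ← zsmul_eq_mul]
  have := norm_toCircle_coe_sub_one_le (T := T) (t - round (T⁻¹ * t) * T)
  rwa [hs, ← norm_eq] at this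

theorem exists_lt_norm_nsmul_le_div {ξ : AddCircle T} (hξ : ¬ IsOfFinAddOrder ξ) (N : ℕ) :
    ∃ n : ℕ, N < n ∧ ‖n • ξ‖ ≤ T / n := by
  have hsmall : Filter.Tendsto (fun m : ℕ ↦ T / ↑(m + 1)) Filter.atTop (nhds 0) :=
    (tendsto_const_div_atTop_nhds_zero_nat T).comp (Filter.tendsto_add_atTop_nat 1)
  have hpos : ∀ j ∈ Finset.Icc 1 N, 0 < ‖j • ξ‖ := fun j hj ↦
    norm_pos_iff.mpr fun h ↦ hξ <| isOfFinAddOrder_iff_nsmul_eq_zero.mpr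
      ⟨j, (Finset.mem_Icc.mp hj).1, h⟩
  obtain ⟨m, hm, hmN⟩ := ((Filter.eventually_gt_atTop 0).and <| (Filter.eventually_all_finset _).mpr
    fun j hj ↦ hsmall.eventually (gt_mem_nhds (hpos j hj))).exists
  obtain ⟨n, hn, hnξ⟩ := exists_norm_nsmul_le ξ hm
  obtain ⟨hn1, hnm⟩ := Set.mem_Icc.mp hn
  refine ⟨n, ?_, hnξ.trans ?_⟩
  · by_contra! hnN
    exact (hmN n (Finset.mem_Icc.mpr ⟨hn1, hnN⟩)).not_ge hnξ
  · gcongr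
    · exact hT.out.le
    · exact_mod_cast hnm.trans (Nat.le_succ m)

end AddCircle

section fourierCoeff

open AddCircle

variable {T : ℝ} [hT : Fact (0 < T)] {E : Type*} [NormedAddCommGroup E] [NormedSpace ℂ E]

theorem norm_fourierCoeff_le_integral_norm (f : AddCircle T → E) (n : ℤ) :
    ‖fourierCoeff f n‖ ≤ ∫ x, ‖f x‖ ∂haarAddCircle :=
  (norm_integral_le_integral_norm _).trans_eq <| by
    simp only [norm_smul, fourier_apply, Circle.norm_coe, one_mul]

theorem fourierCoeff_comp_add_left (f : AddCircle T → E) (a : AddCircle T) (n : ℤ) :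
    fourierCoeff (fun x ↦ f (a + x)) n = fourier n a • fourierCoeff f n := by
  have hshift : ∀ x, fourier n a * fourier (-n) (a + x) = fourier (-n) x := fun x ↦ by
    rw [fourier_apply, fourier_apply, fourier_apply, ← Circle.coe_mul, ← toCircle_add, smul_add,
      neg_smul, add_neg_cancel_left]
  rw [fourierCoeff, fourierCoeff, ← integral_smul,
    ← integral_add_left_eq_self (fun x ↦ fourier n a • fourier (-n) x • f x) a]
  simp only [smul_smul, hshift]

theorem fourierCoeff_sub_comp_add_left {f : AddCircle T → E} (hf : Integrable f haarAddCircle)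
    (a : AddCircle T) (n : ℤ) :
    fourierCoeff (fun x ↦ f x - f (a + x)) n = (1 - fourier n a : ℂ) • fourierCoeff f n := by
  rw [sub_smul, one_smul, ← fourierCoeff_comp_add_left]
  simp only [fourierCoeff, smul_sub]
  exact integral_sub (hf.fourier_smul (-n)) ((hf.comp_add_left a).fourier_smul (-n))

theorem norm_fourierCoeff_sub_comp_add_left_le {f : AddCircle T → E}
    (hf : Integrable f haarAddCircle) (a : AddCircle T) (n : ℤ) :
    ‖fourierCoeff (fun x ↦ f x - f (a + x)) n‖
      ≤ 2 * Real.pi / T * ‖n • a‖ * ∫ x, ‖f x‖ ∂haarAddCircle := by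
  rw [fourierCoeff_sub_comp_add_left hf, norm_smul, norm_sub_rev, fourier_apply]
  exact mul_le_mul (norm_toCircle_sub_one_le _) (norm_fourierCoeff_le_integral_norm f n)
    (norm_nonneg _) (by have := hT.out; positivity)

end fourierCoeff

theorem stmt9_general (α : ℝ) (hα : Irrational α)
    (f : AddCircle (1 : ℝ) → ℂ)
    (hbig : ∀ n : ℕ, 2 ≤ n → Real.log n / n ≤ ‖fourierCoeff f (n : ℤ)‖) :
    ¬ ∃ h : AddCircle (1 : ℝ) → ℂ, Integrable h AddCircle.haarAddCircle ∧
      ∀ᵐ x ∂AddCircle.haarAddCircle,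
        f x = h x - h ((α : AddCircle (1 : ℝ)) + x) := by
  rintro ⟨h, hh, hae⟩
  set C := ∫ x, ‖h x‖ ∂AddCircle.haarAddCircle
  have hα' : ¬ IsOfFinAddOrder (α : AddCircle (1 : ℝ)) :=
    AddCircle.not_isOfFinAddOrder_iff_forall_rat_ne_div.mpr fun q hq ↦ hα ⟨q, by simpa using hq⟩
  obtain ⟨n, hNn, hn⟩ :=
    AddCircle.exists_lt_norm_nsmul_le_div hα' (⌈Real.exp (2 * Real.pi * C)⌉₊ + 1)
  have hn0 : (0 : ℝ) < n := Nat.cast_pos.mpr (by omega)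
  have hupper : ‖fourierCoeff f n‖ ≤ 2 * Real.pi * C / n := by
    rw [fourierCoeff_congr_ae hae]
    calc _ ≤ 2 * Real.pi / 1 * ‖(n : ℤ) • (α : AddCircle (1 : ℝ))‖ * C :=
          norm_fourierCoeff_sub_comp_add_left_le hh _ _
      _ ≤ 2 * Real.pi / 1 * (1 / n) * C := by
          rw [natCast_zsmul]; gcongr
      _ = 2 * Real.pi * C / n := by ring
  have hlog : Real.log n ≤ 2 * Real.pi * C :=
    (div_le_div_iff_of_pos_right hn0).mp ((hbig n (by omega)).trans hupper)
  have hexp : Real.exp (2 * Real.pi * C) < n := Nat.lt_of_ceil_lt (by omega)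
  linarith [(Real.lt_log_iff_exp_lt hn0).mpr hexp]

/-- If f ∈ L¹(𝕋) is mean-zero with |f̂(n)| ≥ (log n)/n for all n ≥ 2 and α
is irrational, then f is not a coboundary for the rotation by α with L¹ transfer
function. -/
theorem stmt9 (α : ℝ) (hα : Irrational α)
    (f : AddCircle (1 : ℝ) → ℂ)
    (hf1 : Integrable f AddCircle.haarAddCircle)
    (hmean : ∫ x, f x ∂AddCircle.haarAddCircle = 0)
    (hbig : ∀ n : ℕ, 2 ≤ n → Real.log n / n ≤ ‖fourierCoeff f (n : ℤ)‖) :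
    ¬ ∃ h : AddCircle (1 : ℝ) → ℂ, Integrable h AddCircle.haarAddCircle ∧
      ∀ᵐ x ∂AddCircle.haarAddCircle,
        f x = h x - h ((α : AddCircle (1 : ℝ)) + x) :=
  stmt9_general α hα f hbig
end

section
/- Let τ be an ergodic invertible measure-preserving transformation of a nonatomic probability space. There exists a mean-zero function f ∈ L¹(X) that is a τ-coboundary with a measurable, a.e.-finite transfer function h which is not integrable. Specifically, given Rokhlin towers {E_n, τE_n, …, τ^{n-1}E_n} with p(E_n) = 1/(2n) and subsets D_n ⊆ E_n with p(D_n) = 1/(2n³), the function H = Σ_{n=1}^∞ n^{3/2} Σ_{k=0}^{n-1} 1_{τᵏD_n} is measurable, finite a.e., non-integrable, and f = H - H∘τ^{-1} belongs to L¹(X). -/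
open MeasureTheory ENNReal

/-!
With `T = τ⁻¹`, `H` is the series `Σₙ cₙ Sₙgₙ` of Birkhoff sums of `gₙ = 1_{Dₙ}`, weighted by
`cₙ = n^{3/2}`. Since `Sₙgₙ + gₙ ∘ Tⁿ = gₙ + Sₙgₙ ∘ T`, the coboundary `H - H ∘ T` equals
`Σ cₙ gₙ - Σ cₙ gₙ ∘ Tⁿ`, a difference of two functions with the same finite integral
`Σ n^{3/2} μ(Dₙ)`. `H` itself is finite a.e. by Borel–Cantelli, as the support of `Sₙgₙ` has measure
at most `n μ(Dₙ)`, which is summable, while `∫ H = Σ n^{5/2} μ(Dₙ) = Σ 1/(2√n) = ∞`.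
-/

lemma natCast_rpow_mul_one_div_two_mul_cube {m : ℕ} (hm : m ≠ 0) {p : ℝ} (hp : 0 ≤ p) :
    (m : ℝ≥0∞) ^ p * (1 / (2 * (m : ℝ≥0∞) ^ 3)) = 2⁻¹ * ↑(((m : NNReal) ^ (3 - p))⁻¹) := by
  have hm' : (m : NNReal) ≠ 0 := by exact_mod_cast hm
  have key : (m : NNReal) ^ p * (1 / (2 * (m : NNReal) ^ 3)) =
      2⁻¹ * ((m : NNReal) ^ (3 - p))⁻¹ := by
    rw [NNReal.rpow_sub hm', NNReal.rpow_ofNat]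
    have : (m : NNReal) ^ p ≠ 0 := by positivity
    field_simp
  have hcube : (1 : ℝ≥0∞) / (2 * (m : ℝ≥0∞) ^ 3) =
      ((1 / (2 * (m : NNReal) ^ 3) : NNReal) : ℝ≥0∞) := by
    rw [ENNReal.coe_div (by positivity)]; push_cast; rfl
  rw [hcube, ← ENNReal.coe_natCast, ← ENNReal.coe_rpow_of_nonneg _ hp, ← ENNReal.coe_mul, key,
    ENNReal.coe_mul, ENNReal.coe_inv two_ne_zero, ENNReal.coe_ofNat]

lemma tsum_natCast_rpow_mul_ne_top_iff {f : ℕ → ℝ≥0∞} (hf : ∀ n, 1 ≤ n → f n = 1 / (2 * n ^ 3))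
    {p : ℝ} (hp : 0 < p) : ∑' n : ℕ, (n : ℝ≥0∞) ^ p * f n ≠ ∞ ↔ p < 2 := by
  have hterm (n : ℕ) : ((n + 1 : ℕ) : ℝ≥0∞) ^ p * f (n + 1) =
      2⁻¹ * ↑((((n + 1 : ℕ) : NNReal) ^ (3 - p))⁻¹) := by
    rw [hf _ n.succ_pos, natCast_rpow_mul_one_div_two_mul_cube n.succ_ne_zero hp.le]
  rw [tsum_eq_zero_add' ENNReal.summable, Nat.cast_zero, ENNReal.zero_rpow_of_pos hp, zero_mul,
    zero_add, tsum_congr hterm, ENNReal.tsum_mul_left,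
    show ∀ a : ℝ≥0∞, 2⁻¹ * a ≠ ∞ ↔ a ≠ ∞ by simp [ENNReal.mul_eq_top],
    ENNReal.tsum_coe_ne_top_iff_summable,
    NNReal.summable_nat_add_iff 1 (f := fun n : ℕ => ((n : NNReal) ^ (3 - p))⁻¹),
    NNReal.summable_rpow_inv]
  constructor <;> intro h <;> linarith

section

variable {X : Type*}

noncomputable def weightedBirkhoffSeries (T : X → X) (c : ℕ → ℝ≥0∞) (g : ℕ → X → ℝ≥0∞)
    (x : X) : ℝ≥0∞ :=
  ∑' n, c n * birkhoffSum T (g n) n x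

lemma weightedBirkhoffSeries_add_tsum_iterate (T : X → X) (c : ℕ → ℝ≥0∞) (g : ℕ → X → ℝ≥0∞)
    (x : X) : weightedBirkhoffSeries T c g x + ∑' n, c n * g n (T^[n] x) =
      weightedBirkhoffSeries T c g (T x) + ∑' n, c n * g n x := by
  simp only [weightedBirkhoffSeries]
  rw [← ENNReal.tsum_add, ← ENNReal.tsum_add]
  refine tsum_congr fun n => ?_
  rw [← mul_add, ← mul_add, ← birkhoffSum_succ, birkhoffSum_succ', add_comm]

variable [MeasurableSpace X] {μ : Measure X}

lemma ae_tsum_ne_top_of_tsum_measure_ne_top {u : ℕ → X → ℝ≥0∞} {s : ℕ → Set X}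
    (hu : ∀ n x, u n x ≠ ∞) (hus : ∀ n, ∀ x ∉ s n, u n x = 0) (hs : ∑' n, μ (s n) ≠ ∞) :
    ∀ᵐ x ∂μ, ∑' n, u n x ≠ ∞ := by
  filter_upwards [ae_finite_setOfPred_mem hs] with x hx
  rw [tsum_eq_sum (s := hx.toFinset) fun n hn => hus n x (by simpa using hn)]
  exact ENNReal.sum_ne_top.2 fun n _ => hu n x

lemma integrable_toReal_sub_comp_of_add_eq {T : X → X} (hT : Measure.QuasiMeasurePreserving T μ μ)
    {H G₁ G₂ : X → ℝ≥0∞} (hadd : ∀ x, H x + G₂ x = H (T x) + G₁ x) (hH : ∀ᵐ x ∂μ, H x ≠ ∞)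
    (hG₁ : AEMeasurable G₁ μ) (hG₂ : AEMeasurable G₂ μ)
    (hG₁_fin : ∫⁻ x, G₁ x ∂μ ≠ ∞) (hG₂_fin : ∫⁻ x, G₂ x ∂μ ≠ ∞) :
    Integrable (fun x => (H x).toReal - (H (T x)).toReal) μ ∧
      ∫ x, ((H x).toReal - (H (T x)).toReal) ∂μ =
        (∫⁻ x, G₁ x ∂μ).toReal - (∫⁻ x, G₂ x ∂μ).toReal := by
  have hG₁_lt := ae_lt_top' hG₁ hG₁_fin
  have hG₂_lt := ae_lt_top' hG₂ hG₂_fin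
  have heq : (fun x => (H x).toReal - (H (T x)).toReal) =ᵐ[μ]
      fun x => (G₁ x).toReal - (G₂ x).toReal := by
    filter_upwards [hH, hT.ae hH, hG₁_lt, hG₂_lt] with x h₀ h₁ h₂ h₃
    have := congrArg ENNReal.toReal (hadd x)
    rw [ENNReal.toReal_add h₀ h₃.ne, ENNReal.toReal_add h₁ h₂.ne] at this
    linarith
  have hint₁ := integrable_toReal_of_lintegral_ne_top hG₁ hG₁_fin
  have hint₂ := integrable_toReal_of_lintegral_ne_top hG₂ hG₂_fin
  refine ⟨(hint₁.sub hint₂).congr heq.symm, ?_⟩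
  rw [integral_congr_ae heq, integral_sub hint₁ hint₂, integral_toReal hG₁ hG₁_lt,
    integral_toReal hG₂ hG₂_lt]

lemma lintegral_tsum_const_mul {f : ℕ → X → ℝ≥0∞} (hf : ∀ n, Measurable (f n)) (c : ℕ → ℝ≥0∞) :
    ∫⁻ x, ∑' n, c n * f n x ∂μ = ∑' n, c n * ∫⁻ x, f n x ∂μ := by
  rw [lintegral_tsum fun n => ((hf n).const_mul (c n)).aemeasurable]
  exact tsum_congr fun n => lintegral_const_mul _ (hf n)

variable {T : X → X}

lemma lintegral_birkhoffSum (hT : MeasurePreserving T μ μ) {g : X → ℝ≥0∞} (hg : Measurable g)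
    (n : ℕ) : ∫⁻ x, birkhoffSum T g n x ∂μ = n * ∫⁻ x, g x ∂μ := by
  simp only [birkhoffSum]
  rw [lintegral_finsetSum (f := fun k x => g (T^[k] x)) _
    fun k _ => hg.comp (hT.measurable.iterate k)]
  simp [(hT.iterate _).lintegral_comp hg]

lemma measure_biUnion_preimage_iterate_le (hT : MeasurePreserving T μ μ) {s : Set X}
    (hs : MeasurableSet s) (n : ℕ) : μ (⋃ k ∈ Finset.range n, T^[k] ⁻¹' s) ≤ n * μ s :=
  (measure_biUnion_finset_le _ _).trans_eq <| by
    simp [(hT.iterate _).measure_preimage hs.nullMeasurableSet]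

variable {c : ℕ → ℝ≥0∞} {g : ℕ → X → ℝ≥0∞}

lemma lintegral_weightedBirkhoffSeries (hT : MeasurePreserving T μ μ) (hg : ∀ n, Measurable (g n)) :
    ∫⁻ x, weightedBirkhoffSeries T c g x ∂μ = ∑' n, c n * (n * ∫⁻ x, g n x ∂μ) := by
  have hS (n : ℕ) : Measurable (birkhoffSum T (g n) n) :=
    Finset.measurable_sum _ fun k _ => (hg n).comp (hT.measurable.iterate k)
  simp only [weightedBirkhoffSeries]
  rw [lintegral_tsum_const_mul hS c]
  exact tsum_congr fun n => by rw [lintegral_birkhoffSum hT (hg n)]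

lemma ae_weightedBirkhoffSeries_indicator_ne_top (hT : MeasurePreserving T μ μ)
    (hc : ∀ n, c n ≠ ∞) {D : ℕ → Set X} (hD : ∀ n, MeasurableSet (D n))
    (hsum : ∑' n : ℕ, (n : ℝ≥0∞) * μ (D n) ≠ ∞) :
    ∀ᵐ x ∂μ, weightedBirkhoffSeries T c (fun n => (D n).indicator 1) x ≠ ∞ := by
  refine ae_tsum_ne_top_of_tsum_measure_ne_top (s := fun n => ⋃ k ∈ Finset.range n, T^[k] ⁻¹' D n)
    (fun n x => ?_) (fun n x hx => ?_) ?_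
  · exact ENNReal.mul_ne_top (hc n) (ENNReal.sum_ne_top.2 fun k _ =>
      ne_top_of_le_ne_top one_ne_top (Set.indicator_le_self' (fun _ _ => zero_le) _))
  · refine mul_eq_zero_of_right _ (Finset.sum_eq_zero fun k hk => Set.indicator_of_notMem ?_ _)
    exact fun hxk => hx (Set.mem_biUnion hk hxk)
  · exact ne_top_of_le_ne_top hsum
      (ENNReal.tsum_le_tsum fun n => measure_biUnion_preimage_iterate_le hT (hD n) n)

lemma integrable_weightedBirkhoffSeries_sub_comp (hT : MeasurePreserving T μ μ)
    (hg : ∀ n, Measurable (g n)) (hW : ∀ᵐ x ∂μ, weightedBirkhoffSeries T c g x ≠ ∞)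
    (hsum : ∑' n, c n * ∫⁻ x, g n x ∂μ ≠ ∞) :
    Integrable (fun x => (weightedBirkhoffSeries T c g x).toReal -
        (weightedBirkhoffSeries T c g (T x)).toReal) μ ∧
      ∫ x, ((weightedBirkhoffSeries T c g x).toReal -
        (weightedBirkhoffSeries T c g (T x)).toReal) ∂μ = 0 := by
  have hG₁ : ∫⁻ x, ∑' n, c n * g n x ∂μ = ∑' n, c n * ∫⁻ x, g n x ∂μ :=
    lintegral_tsum_const_mul hg c
  have hG₂ : ∫⁻ x, ∑' n, c n * g n (T^[n] x) ∂μ = ∑' n, c n * ∫⁻ x, g n x ∂μ := by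
    rw [lintegral_tsum_const_mul (f := fun n x => g n (T^[n] x))
      (fun n => (hg n).comp (hT.measurable.iterate n)) c]
    exact tsum_congr fun n => by rw [(hT.iterate n).lintegral_comp (hg n)]
  obtain ⟨hint, hintegral⟩ := integrable_toReal_sub_comp_of_add_eq hT.quasiMeasurePreserving
    (weightedBirkhoffSeries_add_tsum_iterate T c g) hW
    (Measurable.tsum fun n => (hg n).const_mul (c n)).aemeasurable
    (Measurable.tsum fun n => ((hg n).comp (hT.measurable.iterate n)).const_mul (c n)).aemeasurable
    (hG₁ ▸ hsum) (hG₂ ▸ hsum)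
  exact ⟨hint, by rw [hintegral, hG₁, hG₂, sub_self]⟩

end

theorem stmt12_general {X : Type*} [MeasurableSpace X] (μ : Measure X)
    (τi : X → X) (hτi : MeasurePreserving τi μ μ)
    (D : ℕ → Set X)
    (hDm : ∀ n, MeasurableSet (D n))
    (hDmeas : ∀ n, 1 ≤ n → μ (D n) = 1 / (2 * n ^ 3))
    (H : X → ℝ≥0∞)
    (hH : ∀ x, H x = ∑' n : ℕ, (n : ℝ≥0∞) ^ ((3 : ℝ) / 2) *
      ∑ k ∈ Finset.range n, Set.indicator (τi^[k] ⁻¹' (D n)) (fun _ => (1 : ℝ≥0∞)) x) :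
    (∀ᵐ x ∂μ, H x ≠ ∞) ∧
    (∫⁻ x, H x ∂μ = ∞) ∧
    Integrable (fun x => (H x).toReal - (H (τi x)).toReal) μ ∧
    ∫ x, ((H x).toReal - (H (τi x)).toReal) ∂μ = 0 := by
  obtain rfl : H = weightedBirkhoffSeries τi (fun n => (n : ℝ≥0∞) ^ ((3 : ℝ) / 2))
      (fun n => (D n).indicator 1) := funext hH
  have hsum {p : ℝ} (hp : 0 < p) := tsum_natCast_rpow_mul_ne_top_iff hDmeas hp
  have hfin := ae_weightedBirkhoffSeries_indicator_ne_top hτi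
    (fun n => ENNReal.rpow_ne_top_of_nonneg (by norm_num : (0 : ℝ) ≤ 3 / 2) (natCast_ne_top n)) hDm
    (by simpa using (hsum one_pos).2 one_lt_two)
  have hind (n : ℕ) : Measurable ((D n).indicator (1 : X → ℝ≥0∞)) :=
    measurable_one.indicator (hDm n)
  refine ⟨hfin, ?_, integrable_weightedBirkhoffSeries_sub_comp hτi hind hfin ?_⟩
  · have hpow (n : ℕ) : (n : ℝ≥0∞) ^ ((3 : ℝ) / 2) * (n * μ (D n)) =
        (n : ℝ≥0∞) ^ ((5 : ℝ) / 2) * μ (D n) := by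
      rw [← mul_assoc, show (5 : ℝ) / 2 = 3 / 2 + 1 by norm_num,
        ENNReal.rpow_add_of_nonneg _ _ (by norm_num) zero_le_one, ENNReal.rpow_one]
    rw [lintegral_weightedBirkhoffSeries hτi hind]
    simp_rw [lintegral_indicator_one (hDm _), hpow]
    exact not_ne_iff.1 fun h => ((hsum (by norm_num)).1 h).not_ge (by norm_num)
  · simp_rw [lintegral_indicator_one (hDm _)]
    exact (hsum (by norm_num)).2 (by norm_num)

/-- Explicit construction (via Rokhlin towers E_n of height n with
p(E_n)=1/(2n) and D_n ⊆ E_n with p(D_n)=1/(2n³)) of a measurable, a.e.-finite,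
non-integrable transfer function H = Σ_n n^{3/2} Σ_{k<n} 1_{τᵏD_n} whose coboundary
f = H - H∘τ⁻¹ is integrable (and mean-zero). -/
theorem stmt12 {X : Type*} [MeasurableSpace X] (μ : Measure X) [IsProbabilityMeasure μ]
    [NullSingletonClass μ]
    (τ τi : X → X) (hτ : MeasurePreserving τ μ μ) (hτi : MeasurePreserving τi μ μ)
    (hinv : ∀ x, τi (τ x) = x ∧ τ (τi x) = x)
    (herg : Ergodic τ μ)
    (E D : ℕ → Set X)
    (hEm : ∀ n, MeasurableSet (E n)) (hDm : ∀ n, MeasurableSet (D n))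
    (hDE : ∀ n, D n ⊆ E n)
    -- {E_n, τE_n, …, τ^{n-1}E_n} is a Rokhlin tower (τᵏE_n = (τi^[k])⁻¹(E_n)):
    (htower : ∀ n, ∀ j < n, ∀ k < n, j ≠ k →
      Disjoint (τi^[j] ⁻¹' (E n)) (τi^[k] ⁻¹' (E n)))
    (hEmeas : ∀ n, 1 ≤ n → μ (E n) = 1 / (2 * n))
    (hDmeas : ∀ n, 1 ≤ n → μ (D n) = 1 / (2 * n ^ 3))
    (H : X → ℝ≥0∞)
    (hH : ∀ x, H x = ∑' n : ℕ, (n : ℝ≥0∞) ^ ((3 : ℝ) / 2) *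
      ∑ k ∈ Finset.range n, Set.indicator (τi^[k] ⁻¹' (D n)) (fun _ => (1 : ℝ≥0∞)) x) :
    (∀ᵐ x ∂μ, H x ≠ ∞) ∧
    (∫⁻ x, H x ∂μ = ∞) ∧
    Integrable (fun x => (H x).toReal - (H (τi x)).toReal) μ ∧
    ∫ x, ((H x).toReal - (H (τi x)).toReal) ∂μ = 0 :=
  stmt12_general μ τi hτi D hDm hDmeas H hH
end

section
/- Let τ be an invertible measure-preserving transformation of a probability space and suppose E ∈ ℬ satisfies p(⋃_{k=1}^{n} τ^{-k}E) < 1 for all n ≥ 1. Let F = X ∖ E and f = 1_F - p(F). Then for every n, ‖Σ_{k=1}^{n} f∘τᵏ‖_∞ ≥ n·p(E), so f is not a τ-coboundary with transfer function in L^∞(X) (provided p(E) > 0). -/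
/-!
If `f = h - h ∘ τ` a.e. with `h` essentially bounded by `C`, the sums `∑_{k=1}^n f ∘ τᵏ`
telescope to `h ∘ τ - h ∘ τⁿ⁺¹`, so they stay bounded by `2C`. On the other hand, on the
complement of `⋃_{k=1}^n τ⁻ᵏ E`, which has positive measure, every term `f ∘ τᵏ` equals
`1 - p(F) = p(E)`, so the sum equals `n p(E)`; this forces the essential supremum to grow linearly.
-/

open MeasureTheory ENNReal Finset

theorem sum_Icc_iterate_sub_comp {X G : Type*} [AddCommGroup G] (τ : X → X) (h : X → G)
    (n : ℕ) (x : X) :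
    ∑ k ∈ Icc 1 n, (h (τ^[k] x) - h (τ (τ^[k] x))) = h (τ x) - h (τ^[n + 1] x) := by
  induction n with
  | zero => simp
  | succ n ih =>
    rw [sum_Icc_succ_top (by omega), ih, ← Function.iterate_succ_apply' τ (n + 1)]
    abel

section General

variable {X : Type*} [MeasurableSpace X] {μ : Measure X}

theorem le_eLpNorm_top_of_forall_mem {E : Type*} [ENorm E] {g : X → E} {s : Set X} {c : ℝ≥0∞}
    (hs : μ s ≠ 0) (hg : ∀ x ∈ s, c ≤ ‖g x‖ₑ) : c ≤ eLpNorm g ⊤ μ := by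
  rw [eLpNorm_exponent_top]
  by_contra! hlt
  exact hs <| measure_mono_null (fun x hx => hlt.trans_le (hg x hx)) meas_eLpNormEssSup_lt

theorem MeasureTheory.Measure.QuasiMeasurePreserving.ae_forall_iterate {τ : X → X}
    (hτ : Measure.QuasiMeasurePreserving τ μ μ) {p : X → Prop} (hp : ∀ᵐ x ∂μ, p x) :
    ∀ᵐ x ∂μ, ∀ k, p (τ^[k] x) :=
  ae_all_iff.2 fun k => (hτ.iterate k).ae hp

theorem eLpNorm_top_sum_iterate_le_of_ae_eq_sub_comp {G : Type*} [NormedAddCommGroup G]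
    {τ : X → X} (hτ : Measure.QuasiMeasurePreserving τ μ μ) {f h : X → G}
    (hf : ∀ᵐ x ∂μ, f x = h x - h (τ x)) (n : ℕ) :
    eLpNorm (fun x => ∑ k ∈ Icc 1 n, f (τ^[k] x)) ⊤ μ ≤ 2 * eLpNorm h ⊤ μ := by
  rw [eLpNorm_exponent_top, eLpNorm_exponent_top]
  refine eLpNormEssSup_le_of_ae_enorm_bound ?_
  filter_upwards [hτ.ae_forall_iterate hf, hτ.ae_forall_iterate (ae_le_eLpNormEssSup (f := h))]
    with x hfx hhx
  rw [sum_congr rfl fun k _ => hfx k, sum_Icc_iterate_sub_comp]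
  calc ‖h (τ x) - h (τ^[n + 1] x)‖ₑ ≤ ‖h (τ^[1] x)‖ₑ + ‖h (τ^[n + 1] x)‖ₑ := enorm_sub_le
    _ ≤ eLpNormEssSup h μ + eLpNormEssSup h μ := add_le_add (hhx 1) (hhx (n + 1))
    _ = 2 * eLpNormEssSup h μ := (two_mul _).symm

end General

section Recurrence

variable {X : Type*} [MeasurableSpace X] {μ : Measure X} [IsProbabilityMeasure μ]
  {τ : X → X} {E : Set X} {f : X → ℝ}

theorem sum_iterate_eq_of_notMem_iUnion (hE : MeasurableSet E)
    (hf : ∀ x, f x = Set.indicator Eᶜ (fun _ => (1 : ℝ)) x - (μ Eᶜ).toReal) {n : ℕ} {x : X}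
    (hx : x ∉ ⋃ k ∈ Icc 1 n, τ^[k] ⁻¹' E) :
    ∑ k ∈ Icc 1 n, f (τ^[k] x) = n * μ.real E := by
  have hterm : ∀ k ∈ Icc 1 n, f (τ^[k] x) = μ.real E := fun k hk => by
    have hxk : τ^[k] x ∈ Eᶜ := fun hmem => hx (Set.mem_biUnion hk hmem)
    rw [hf, Set.indicator_of_mem hxk, ← measureReal_def, probReal_compl_eq_one_sub hE]
    ring
  rw [sum_congr rfl hterm, sum_const, Nat.card_Icc, nsmul_eq_mul, Nat.add_sub_cancel]

theorem natCast_mul_measure_le_eLpNorm_top_sum_iterate (hE : MeasurableSet E)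
    (hf : ∀ x, f x = Set.indicator Eᶜ (fun _ => (1 : ℝ)) x - (μ Eᶜ).toReal) {n : ℕ}
    (hsmall : μ (⋃ k ∈ Icc 1 n, τ^[k] ⁻¹' E) < 1) :
    (n : ℝ≥0∞) * μ E ≤ eLpNorm (fun x => ∑ k ∈ Icc 1 n, f (τ^[k] x)) ⊤ μ := by
  set U := ⋃ k ∈ Icc 1 n, τ^[k] ⁻¹' E
  have hUc : μ Uᶜ ≠ 0 := fun h0 => by
    have := measure_univ_le_add_compl (μ := μ) U
    rw [measure_univ, h0, add_zero] at this
    exact hsmall.not_ge this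
  refine le_eLpNorm_top_of_forall_mem hUc fun x hx => ?_
  rw [sum_iterate_eq_of_notMem_iUnion hE hf hx, Real.enorm_of_nonneg (by positivity),
    ENNReal.ofReal_mul (by positivity), ENNReal.ofReal_natCast, ofReal_measureReal]

end Recurrence

theorem stmt13_general {X : Type*} [MeasurableSpace X] (μ : Measure X) [IsProbabilityMeasure μ]
    (τ : X → X) (hτ : MeasurePreserving τ μ μ)
    (E : Set X) (hE : MeasurableSet E)
    (hsmall : ∀ n : ℕ, 1 ≤ n → μ (⋃ k ∈ Finset.Icc 1 n, τ^[k] ⁻¹' E) < 1)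
    (f : X → ℝ)
    (hf : ∀ x, f x = Set.indicator Eᶜ (fun _ => (1 : ℝ)) x - (μ Eᶜ).toReal) :
    (∀ n : ℕ, 1 ≤ n →
      (n : ℝ≥0∞) * μ E ≤ eLpNorm (fun x => ∑ k ∈ Finset.Icc 1 n, f (τ^[k] x)) ⊤ μ) ∧
    (0 < μ E →
      ¬ ∃ h : X → ℝ, MemLp h ⊤ μ ∧ ∀ᵐ x ∂μ, f x = h x - h (τ x)) := by
  have hsmall' (n : ℕ) : μ (⋃ k ∈ Icc 1 n, τ^[k] ⁻¹' E) < 1 := by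
    rcases Nat.eq_zero_or_pos n with rfl | hn
    · simp
    · exact hsmall n hn
  have hlower (n : ℕ) := natCast_mul_measure_le_eLpNorm_top_sum_iterate hE hf (hsmall' n)
  refine ⟨fun n _ => hlower n, ?_⟩
  rintro hEpos ⟨h, hh, hcob⟩
  have hbound : 2 * eLpNorm h ⊤ μ ≠ ∞ := mul_ne_top ofNat_ne_top hh.eLpNorm_ne_top
  obtain ⟨n, hn⟩ := ENNReal.exists_nat_mul_gt hEpos.ne' hbound
  exact hn.not_ge <| (hlower n).trans <|
    eLpNorm_top_sum_iterate_le_of_ae_eq_sub_comp hτ.quasiMeasurePreserving hcob n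

/-- If p(⋃_{k=1}^n τ^{-k}E) < 1 for all n, F = X∖E and f = 1_F - p(F),
then ‖Σ_{k=1}^n f∘τᵏ‖_∞ ≥ n·p(E) for all n, so if p(E) > 0 then f is not a
τ-coboundary with transfer function in L^∞. -/
theorem stmt13 {X : Type*} [MeasurableSpace X] (μ : Measure X) [IsProbabilityMeasure μ]
    (τ τi : X → X) (hτ : MeasurePreserving τ μ μ) (hτi : MeasurePreserving τi μ μ)
    (hinv : ∀ x, τi (τ x) = x ∧ τ (τi x) = x)
    (E : Set X) (hE : MeasurableSet E)
    (hsmall : ∀ n : ℕ, 1 ≤ n → μ (⋃ k ∈ Finset.Icc 1 n, τ^[k] ⁻¹' E) < 1)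
    (f : X → ℝ)
    (hf : ∀ x, f x = Set.indicator Eᶜ (fun _ => (1 : ℝ)) x - (μ Eᶜ).toReal) :
    (∀ n : ℕ, 1 ≤ n →
      (n : ℝ≥0∞) * μ E ≤ eLpNorm (fun x => ∑ k ∈ Finset.Icc 1 n, f (τ^[k] x)) ⊤ μ) ∧
    (0 < μ E →
      ¬ ∃ h : X → ℝ, MemLp h ⊤ μ ∧ ∀ᵐ x ∂μ, f x = h x - h (τ x)) :=
  stmt13_general μ τ hτ E hE hsmall f hf
end

section
/- Let τ be an invertible measure-preserving transformation of a probability space. Given sets E_n with p(E_n) > 0 and Σ_{n=1}^∞ n·p(E_n) ≤ ε, the set E = X ∖ (⋃_{n=1}^∞ ⋃_{k=1}^{n} τᵏE_n) satisfies p(E) ≥ 1 - ε and ⋃_{k=1}^{n} τ^{-k}E ⊆ X ∖ E_n for all n; in particular p(⋃_{k=1}^{n} τ^{-k}E) ≤ 1 - p(E_n) < 1 for every n. -/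
open MeasureTheory ENNReal

/-- Given sets E_n of positive measure with Σ n·p(E_n) ≤ ε, the set
E = X ∖ ⋃_n ⋃_{k=1}^n τᵏE_n satisfies p(E) ≥ 1 - ε, ⋃_{k=1}^n τ^{-k}E ⊆ X∖E_n, and
p(⋃_{k=1}^n τ^{-k}E) ≤ 1 - p(E_n) < 1 for every n ≥ 1. -/
theorem stmt14 {X : Type*} [MeasurableSpace X] (μ : Measure X) [IsProbabilityMeasure μ]
    (τ τi : X → X) (hτ : MeasurePreserving τ μ μ) (hτi : MeasurePreserving τi μ μ)
    (hinv : ∀ x, τi (τ x) = x ∧ τ (τi x) = x)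
    (ε : ℝ≥0∞)
    (E : ℕ → Set X) (hEm : ∀ n, MeasurableSet (E n))
    (hEpos : ∀ n : ℕ, 1 ≤ n → 0 < μ (E n))
    (hsum : ∑' n : ℕ, (n : ℝ≥0∞) * μ (E n) ≤ ε)
    -- τᵏ(E n) = (τi^[k])⁻¹(E n) since τ is invertible with inverse τi
    (A : Set X)
    (hA : A = (⋃ n : ℕ, ⋃ k ∈ Finset.Icc 1 n, τi^[k] ⁻¹' (E n))ᶜ) :
    1 - ε ≤ μ A ∧
    (∀ n : ℕ, 1 ≤ n →
      (⋃ k ∈ Finset.Icc 1 n, τ^[k] ⁻¹' A) ⊆ (E n)ᶜ ∧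
      μ (⋃ k ∈ Finset.Icc 1 n, τ^[k] ⁻¹' A) ≤ 1 - μ (E n) ∧
      μ (⋃ k ∈ Finset.Icc 1 n, τ^[k] ⁻¹' A) < 1) := by
  set S := ⋃ n : ℕ, ⋃ k ∈ Finset.Icc 1 n, τi^[k] ⁻¹' (E n) with hS
  have hSm : MeasurableSet S := by
    apply MeasurableSet.iUnion
    intro n
    apply MeasurableSet.biUnion (Set.to_countable _)
    intro k _
    exact (hτi.iterate k).measurable (hEm n)
  have hμS : μ S ≤ ε := by
    refine le_trans (measure_iUnion_le _) (le_trans (ENNReal.tsum_le_tsum fun n => ?_) hsum)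
    calc μ (⋃ k ∈ Finset.Icc 1 n, τi^[k] ⁻¹' (E n))
        ≤ ∑ k ∈ Finset.Icc 1 n, μ (τi^[k] ⁻¹' (E n)) := measure_biUnion_finset_le _ _
      _ = ∑ k ∈ Finset.Icc 1 n, μ (E n) := by
          refine Finset.sum_congr rfl fun k _ => ?_
          exact (hτi.iterate k).measure_preimage (hEm n).nullMeasurableSet
      _ = (n : ℝ≥0∞) * μ (E n) := by
          rw [Finset.sum_const, Nat.card_Icc]
          simp [nsmul_eq_mul]
  constructor
  · rw [hA, measure_compl hSm (measure_ne_top μ S), measure_univ]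
    exact tsub_le_tsub_left hμS 1
  · intro n hn
    have hsub : (⋃ k ∈ Finset.Icc 1 n, τ^[k] ⁻¹' A) ⊆ (E n)ᶜ := by
      intro x hx
      simp only [Set.mem_iUnion] at hx
      obtain ⟨k, hk, hxk⟩ := hx
      intro hxE
      rw [hA] at hxk
      apply hxk
      refine Set.mem_iUnion.2 ⟨n, Set.mem_iUnion.2 ⟨k, Set.mem_iUnion.2 ⟨hk, ?_⟩⟩⟩
      have : τi^[k] (τ^[k] x) = x :=
        (Function.LeftInverse.iterate (fun y => (hinv y).1) k) x
      simpa [Set.mem_preimage, this] using hxE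
    have hle : μ (⋃ k ∈ Finset.Icc 1 n, τ^[k] ⁻¹' A) ≤ 1 - μ (E n) := by
      calc μ (⋃ k ∈ Finset.Icc 1 n, τ^[k] ⁻¹' A) ≤ μ ((E n)ᶜ) := measure_mono hsub
        _ = 1 - μ (E n) := by
            rw [measure_compl (hEm n) (measure_ne_top μ _), measure_univ]
    refine ⟨hsub, hle, lt_of_le_of_lt hle ?_⟩
    exact ENNReal.sub_lt_self one_ne_top one_ne_zero (hEpos n hn).ne'
end

section
/- Let τ be an ergodic invertible measure-preserving transformation of a standard probability space, 1 ≤ r ≤ ∞. The set of f ∈ L^r(X) that are τ-coboundaries with a measurable transfer function is of first category in L^r(X); i.e., the generic f ∈ L^r(X) is not of the form h - h∘τ for any measurable h. -/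
/-!
If `f = h - h ∘ τ`, the Birkhoff sums `Sₙ f = h - h ∘ τⁿ` are tight, since `h ∘ τⁿ` has the law
of `h`; so every coboundary lies in some `schmidtSet μ τ r A`, where `|Sₙ f| ≤ A` with probability
at least `1/2` for every `n`. These sets are closed because `Lᵣ`-convergence gives a.e.
convergence along a subsequence. They have empty interior: adding a constant `c` to `f` shifts
`Sₙ f` by `n c`, so for `n c > 2A` the events `|Sₙ (f + k c)| ≤ A`, `k = -1, 0, 1`, are
disjoint and cannot all have probability `1/2`.
-/

open MeasureTheory Filter Topology ENNReal

section
variable {α M : Type*} {τ : α → α}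

lemma birkhoffSum_sub_comp [AddCommGroup M] (h : α → M) (n : ℕ) (x : α) :
    birkhoffSum τ (fun y => h y - h (τ y)) n x = h x - h (τ^[n] x) := by
  simp only [birkhoffSum, ← Function.iterate_succ_apply' τ]
  exact Finset.sum_range_sub' (fun k => h (τ^[k] x)) n

lemma birkhoffSum_add_const [AddCommMonoid M] (f : α → M) (c : M) (n : ℕ) (x : α) :
    birkhoffSum τ (fun y => f y + c) n x = birkhoffSum τ f n x + n • c := by
  simp [birkhoffSum, Finset.sum_add_distrib]

end

section
variable {α : Type*} [MeasurableSpace α] {μ : Measure α}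

lemma le_measure_limsup_atTop [IsFiniteMeasure μ] {s : ℕ → Set α}
    (hs : ∀ j, NullMeasurableSet (s j) μ) {c : ℝ≥0∞} (hc : ∀ j, c ≤ μ (s j)) :
    c ≤ μ (limsup s atTop) := by
  have hanti : Antitone fun n => ⋃ i ≥ n, s i := fun m n hmn =>
    Set.biUnion_subset_biUnion_left fun i hi => le_trans hmn hi
  rw [limsup_eq_iInf_iSup_of_nat]
  simp only [Set.iSup_eq_iUnion, Set.iInf_eq_iInter]
  rw [hanti.measure_iInter
    (fun n => .biUnion (Set.to_countable _) fun i _ => hs i) ⟨0, measure_ne_top _ _⟩]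
  exact le_iInf fun n =>
    (hc n).trans (measure_mono (Set.subset_iUnion₂_of_subset n le_rfl subset_rfl))

lemma le_measure_preimage_of_ae_tendsto [IsFiniteMeasure μ] {β : Type*} [TopologicalSpace β]
    [MeasurableSpace β] [OpensMeasurableSpace β] {F : ℕ → α → β} {G : α → β}
    (hF : ∀ j, AEMeasurable (F j) μ) (hFG : ∀ᵐ x ∂μ, Tendsto (fun j => F j x) atTop (𝓝 (G x)))
    {K : Set β} (hK : IsClosed K) {c : ℝ≥0∞} (hc : ∀ j, c ≤ μ (F j ⁻¹' K)) :
    c ≤ μ (G ⁻¹' K) := by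
  refine (le_measure_limsup_atTop (fun j => (hF j).nullMeasurable hK.measurableSet) hc).trans
    (measure_mono_ae ?_)
  filter_upwards [hFG] with x hx hxK
  exact hK.mem_of_frequently_of_tendsto (mem_limsup_iff_frequently_mem.1 hxK :) hx

lemma exists_measure_lt_abs_lt [IsFiniteMeasure μ] {h : α → ℝ} (hh : AEMeasurable h μ)
    {ε : ℝ≥0∞} (hε : 0 < ε) : ∃ m : ℕ, μ {x | (m : ℝ) < |h x|} < ε := by
  have hanti : Antitone fun m : ℕ => {x | (m : ℝ) < |h x|} :=
    fun a b hab x (hx : (b : ℝ) < |h x|) =>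
      show (a : ℝ) < |h x| from (Nat.cast_le.2 hab).trans_lt hx
  have hlim := tendsto_measure_iInter_atTop
    (fun m => nullMeasurableSet_lt aemeasurable_const hh.abs) hanti ⟨0, measure_ne_top μ _⟩
  have hempty : ⋂ m : ℕ, {x | (m : ℝ) < |h x|} = ∅ :=
    Set.iInter_eq_empty_iff.2 fun x => (exists_nat_ge |h x|).imp fun m hm => hm.not_gt
  rw [hempty, measure_empty] at hlim
  exact (hlim.eventually_lt_const hε).exists

lemma le_two_mul_of_half_le_measure_abs_le [IsProbabilityMeasure μ] {F : α → ℝ}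
    (hF : Measurable F) {A δ : ℝ} (h₁ : 1 / 2 ≤ μ {x | |F x - δ| ≤ A})
    (h₂ : 1 / 2 ≤ μ {x | |F x| ≤ A}) (h₃ : 1 / 2 ≤ μ {x | |F x + δ| ≤ A}) : δ ≤ 2 * A := by
  by_contra! hδ
  set T : ℝ → Set α := fun c => {x | |F x + c| ≤ A}
  have hmeas (c : ℝ) : MeasurableSet (T c) :=
    measurableSet_le (hF.add_const c).abs measurable_const
  have hdisj (c d : ℝ) (hcd : 2 * A < |c - d|) : Disjoint (T c) (T d) :=
    Set.disjoint_left.2 fun x (hc : |F x + c| ≤ A) (hd : |F x + d| ≤ A) => by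
      have := abs_sub (F x + c) (F x + d)
      rw [add_sub_add_left_eq_sub] at this
      linarith
  have hδ' : 2 * A < |δ| := hδ.trans_le (le_abs_self δ)
  have h2δ : |-δ - δ| = 2 * |δ| := by rw [← neg_add', abs_neg, ← two_mul, abs_mul, abs_two]
  have hsum : μ (T (-δ)) + μ (T 0) + μ (T δ) ≤ 1 := by
    have h₁₃ : Disjoint (T (-δ)) (T δ) := hdisj _ _ (by rw [h2δ]; linarith [abs_nonneg δ])
    rw [← measure_union (hdisj _ _ (by simpa using hδ')) (hmeas 0), ← measure_union
      (Set.disjoint_union_left.2 ⟨h₁₃, hdisj _ _ (by simpa using hδ')⟩) (hmeas δ)]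
    exact prob_le_one
  have : 1 / 2 + 1 / 2 + 1 / 2 ≤ (1 : ℝ≥0∞) := by
    refine le_trans ?_ hsum
    gcongr
    · simpa [T, sub_eq_add_neg] using h₁
    · simpa [T] using h₂
  rw [ENNReal.add_halves] at this
  exact (ENNReal.lt_add_right one_ne_top (by norm_num)).not_ge this

end

section
variable {α M : Type*} [MeasurableSpace α] {μ : Measure α} {τ : α → α}

lemma Measurable.birkhoffSum [AddCommMonoid M] [MeasurableSpace M] [MeasurableAdd₂ M]
    (hτ : Measurable τ) {f : α → M} (hf : Measurable f) (n : ℕ) :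
    Measurable (birkhoffSum τ f n) :=
  Finset.measurable_sum _ fun k _ => hf.comp (hτ.iterate k)

lemma ae_tendsto_birkhoffSum [AddCommMonoid M] [TopologicalSpace M] [ContinuousAdd M]
    {ι : Type*} {l : Filter ι} (hτ : Measure.QuasiMeasurePreserving τ μ μ) {g : ι → α → M}
    {f : α → M} (hg : ∀ᵐ x ∂μ, Tendsto (fun j => g j x) l (𝓝 (f x))) (n : ℕ) :
    ∀ᵐ x ∂μ, Tendsto (fun j => birkhoffSum τ (g j) n x) l (𝓝 (birkhoffSum τ f n x)) := by
  filter_upwards [ae_all_iff.2 fun k => (hτ.iterate k).ae hg] with x hx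
  exact tendsto_finsetSum _ fun k _ => hx k

lemma exists_forall_half_le_measure_abs_birkhoffSum_le [IsProbabilityMeasure μ]
    (hτ : MeasurePreserving τ μ μ) {f h : α → ℝ} (hf : Measurable f) (hh : AEMeasurable h μ)
    (hfh : ∀ᵐ x ∂μ, f x = h x - h (τ x)) :
    ∃ A : ℕ, ∀ n, 1 / 2 ≤ μ {x | |birkhoffSum τ f n x| ≤ A} := by
  obtain ⟨m, hm⟩ := exists_measure_lt_abs_lt hh (show (0 : ℝ≥0∞) < 1 / 4 by norm_num)
  refine ⟨2 * m, fun n => ?_⟩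
  set B := {x | (m : ℝ) < |h x|}
  have hS : birkhoffSum τ f n =ᵐ[μ] fun x => h x - h (τ^[n] x) := by
    filter_upwards [hτ.quasiMeasurePreserving.birkhoffSum_ae_eq_of_ae_eq hfh n] with x hx
    rw [hx, birkhoffSum_sub_comp]
  have hS_meas : MeasurableSet {x | |birkhoffSum τ f n x| ≤ ((2 * m : ℕ) : ℝ)} :=
    measurableSet_le (hτ.measurable.birkhoffSum hf n).abs measurable_const
  have hcompl : μ {x | |birkhoffSum τ f n x| ≤ ((2 * m : ℕ) : ℝ)}ᶜ ≤ 1 / 2 := calc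
    _ ≤ μ (B ∪ τ^[n] ⁻¹' B) := measure_mono_ae <| by
      filter_upwards [hS] with x hx (hbig : ¬|birkhoffSum τ f n x| ≤ ((2 * m : ℕ) : ℝ))
      show (m : ℝ) < |h x| ∨ (m : ℝ) < |h (τ^[n] x)|
      by_contra! hsmall
      rw [hx] at hbig
      push_cast at hbig
      linarith [abs_sub (h x) (h (τ^[n] x))]
    _ ≤ μ B + μ (τ^[n] ⁻¹' B) := measure_union_le _ _
    _ = μ B + μ B := by
      rw [(hτ.iterate n).measure_preimage (nullMeasurableSet_lt aemeasurable_const hh.abs)]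
    _ ≤ 1 / 4 + 1 / 4 := add_le_add hm.le hm.le
    _ = 1 / 2 := by rw [ENNReal.div_add_div_same, ENNReal.div_eq_div_iff] <;> norm_num
  rw [prob_compl_eq_one_sub hS_meas] at hcompl
  calc (1 / 2 : ℝ≥0∞) = 1 - 1 / 2 := by rw [one_div, ENNReal.one_sub_inv_two]
    _ ≤ _ := tsub_le_iff_tsub_le.1 hcompl

variable (μ τ) in
def schmidtSet (r : ℝ≥0∞) (A : ℝ) : Set (Lp ℝ r μ) :=
  {f | ∀ n, 1 / 2 ≤ μ {x | |birkhoffSum τ f n x| ≤ A}}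

lemma isClosed_schmidtSet [IsFiniteMeasure μ] (hτ : Measure.QuasiMeasurePreserving τ μ μ)
    (r : ℝ≥0∞) [Fact (1 ≤ r)] (A : ℝ) : IsClosed (schmidtSet μ τ r A) := by
  simp only [schmidtSet, Set.ofPred_forall]
  refine isClosed_iInter fun n => IsSeqClosed.isClosed fun g f hg hgf => ?_
  obtain ⟨ns, -, hns⟩ := (tendstoInMeasure_of_tendsto_Lp hgf).exists_seq_tendsto_ae
  exact le_measure_preimage_of_ae_tendsto
    (fun j => (hτ.measurable.birkhoffSum (Lp.stronglyMeasurable _).measurable n).aemeasurable)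
    (ae_tendsto_birkhoffSum hτ hns n) (isClosed_le continuous_abs continuous_const)
    fun j => hg (ns j)

lemma interior_schmidtSet_eq_empty [IsProbabilityMeasure μ]
    (hτ : Measure.QuasiMeasurePreserving τ μ μ) (r : ℝ≥0∞) [Fact (1 ≤ r)] (A : ℝ) :
    interior (schmidtSet μ τ r A) = ∅ := by
  refine Set.eq_empty_of_forall_notMem fun f hf => ?_
  obtain ⟨ε, hε, hball⟩ := Metric.mem_nhds_iff.1 (mem_interior_iff_mem_nhds.1 hf)
  obtain ⟨n, hn⟩ := exists_nat_gt (2 * A / (ε / 2))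
  have hr : r ≠ 0 := (zero_lt_one.trans_le Fact.out).ne'
  have hε₂ : |ε / 2| < ε := by rw [abs_of_pos (half_pos hε)]; exact half_lt_self hε
  have hshift (c : ℝ) (hc : |c| < ε) :
      1 / 2 ≤ μ {x | |birkhoffSum τ f n x + n * c| ≤ A} := by
    have hmem : f + Lp.const r μ c ∈ schmidtSet μ τ r A := hball <| by
      simpa [dist_eq_norm, Lp.norm_const (p := r) (μ := μ) (hp_zero := hr)] using hc
    refine (hmem n).trans_eq (measure_congr ?_)
    have hcoe : ⇑(f + Lp.const r μ c) =ᵐ[μ] fun x => f x + c := by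
      filter_upwards [Lp.coeFn_add f (Lp.const r μ c), Lp.coeFn_const r μ c] with x h₁ h₂
      rw [h₁, Pi.add_apply, h₂, Function.const_apply]
    filter_upwards [hτ.birkhoffSum_ae_eq_of_ae_eq hcoe n] with x hx
    change (|_| ≤ A) = (|_| ≤ A)
    rw [hx, birkhoffSum_add_const, nsmul_eq_mul]
  have := le_two_mul_of_half_le_measure_abs_le
    (hτ.measurable.birkhoffSum (Lp.stronglyMeasurable f).measurable n)
    (by simpa [sub_eq_add_neg] using hshift (-(ε / 2)) (by rwa [abs_neg]))
    (interior_subset hf n) (hshift (ε / 2) hε₂)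
  rw [div_lt_iff₀ (half_pos hε)] at hn
  linarith

end

theorem stmt16_general {X : Type*} [MeasurableSpace X]
    (μ : Measure X) [IsProbabilityMeasure μ]
    (τ : X → X) (hτ : MeasurePreserving τ μ μ)
    (r : ℝ≥0∞) [Fact (1 ≤ r)] :
    IsMeagre {f : Lp ℝ r μ | ∃ h : X → ℝ, Measurable h ∧
      ∀ᵐ x ∂μ, (f : X → ℝ) x = h x - h (τ x)} := by
  refine (isMeagre_iUnion fun A : ℕ => ?_).mono fun f ⟨h, hh, hfh⟩ => Set.mem_iUnion.2 <|
    exists_forall_half_le_measure_abs_birkhoffSum_le hτ (Lp.stronglyMeasurable f).measurable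
      hh.aemeasurable hfh
  have hclosed := isClosed_schmidtSet hτ.quasiMeasurePreserving r (A : ℝ)
  exact IsNowhereDense.isMeagre <| hclosed.isNowhereDense_iff.2 <|
    interior_schmidtSet_eq_empty hτ.quasiMeasurePreserving r A

/-- For an ergodic invertible measure-preserving τ on a standard
probability space and 1 ≤ r ≤ ∞, the set of f ∈ L^r that are τ-coboundaries with a
measurable transfer function is meagre (first category) in L^r. -/
theorem stmt16 {X : Type*} [MeasurableSpace X] [StandardBorelSpace X]
    (μ : Measure X) [IsProbabilityMeasure μ] [NullSingletonClass μ]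
    (τ τi : X → X) (hτ : MeasurePreserving τ μ μ) (hτi : MeasurePreserving τi μ μ)
    (hinv : ∀ x, τi (τ x) = x ∧ τ (τi x) = x)
    (herg : Ergodic τ μ)
    (r : ℝ≥0∞) [Fact (1 ≤ r)] :
    IsMeagre {f : Lp ℝ r μ | ∃ h : X → ℝ, Measurable h ∧
      ∀ᵐ x ∂μ, (f : X → ℝ) x = h x - h (τ x)} :=
  stmt16_general μ τ hτ r
end
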